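/- arXiv:1903.06975 — 2 statements merged into one kernel-verified Lean document; each statement's English description precedes it below -/
import Mathlib

section
/- For two ideals I and J of a commutative ring A, V(I) ⊆ V(J) if and only if the real radical of I contains the real radical of J. -/
/-- An ideal `J` of a commutative ring is *real* if whenever a finite sum of squares
`∑ i, a i ^ 2` lies in `J`, each `a i` lies in `J`. -/
def IsRealIdeal {A : Type*} [CommRing A] (J : Ideal A) : Prop :=
  ∀ (n : ℕ) (a : Fin n → A), (∑ i, a i ^ 2) ∈ J → ∀ i, a i ∈ J

/-- The real Zariski spectrum: the set of real prime ideals of `A`. -/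
structure RealSpectrum (A : Type*) [CommRing A] where
  asIdeal : Ideal A
  isPrime : asIdeal.IsPrime
  isReal : IsRealIdeal asIdeal

namespace RealSpectrum

variable {A : Type*} [CommRing A]

instance (p : RealSpectrum A) : p.asIdeal.IsPrime := p.isPrime

/-- `V(I)`: the set of real prime ideals containing `I`. -/
def zeroLocus (I : Ideal A) : Set (RealSpectrum A) := {p | I ≤ p.asIdeal}

/-- `D(f)`: the set of real prime ideals not containing `f`. -/
def basicOpen (f : A) : Set (RealSpectrum A) := {p | f ∉ p.asIdeal}

end RealSpectrum

/-- The real radical of an ideal `I`: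
`√[R]{I} = { a : ∃ m n (b : Fin n → A), a ^ (2 * m) + ∑ i, b i ^ 2 ∈ I }`. -/
def realRadical {A : Type*} [CommRing A] (I : Ideal A) : Set A :=
  {a | ∃ (m n : ℕ) (b : Fin n → A), a ^ (2 * m) + ∑ i, b i ^ 2 ∈ I}

/-!
A real prime `p ⊇ J` contains `√[R]{J}`: from `a ^ (2 * m) + ∑ b i ^ 2 ∈ p`, realness gives
`a ^ m ∈ p`. Conversely, `a ∉ √[R]{I}` says that `I` misses the multiplicative set
`S = {a ^ (2 * m) + s | s a sum of squares}`. An ideal `p ⊇ I` maximal among those missing `S`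
is prime, and it is real because `S` is stable under adding sums of squares. Then `p ∈ V(I)`,
and `p ∉ V(J)` as soon as `a ∈ √[R]{J}`.
-/

section RealRadical

variable {A : Type*} [CommRing A]

theorem IsSumSq.exists_eq_sum_fin_sq {s : A} (h : IsSumSq s) :
    ∃ (n : ℕ) (b : Fin n → A), s = ∑ i, b i ^ 2 := by
  induction h with
  | zero => exact ⟨0, ![], by simp⟩
  | @sq_add a s _ ih =>
    obtain ⟨n, b, rfl⟩ := ih
    exact ⟨n + 1, Fin.cons a b, by simp [Fin.sum_univ_succ, sq]⟩

def realRadicalSubmonoid (a : A) : Submonoid A where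
  carrier := {u | ∃ (m : ℕ) (s : A), IsSumSq s ∧ u = a ^ (2 * m) + s}
  one_mem' := ⟨0, 0, .zero, by simp⟩
  mul_mem' := by
    rintro _ _ ⟨m, s, hs, rfl⟩ ⟨m', s', hs', rfl⟩
    have hpow (k : ℕ) : IsSumSq (a ^ (2 * k)) := IsSquare.isSumSq ⟨a ^ k, by ring⟩
    refine ⟨m + m', a ^ (2 * m) * s' + s * a ^ (2 * m') + s * s',
      (((hpow m).mul hs').add (hs.mul (hpow m'))).add (hs.mul hs'), by ring⟩

theorem mem_realRadicalSubmonoid {a u : A} :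
    u ∈ realRadicalSubmonoid a ↔ ∃ (m : ℕ) (s : A), IsSumSq s ∧ u = a ^ (2 * m) + s :=
  Iff.rfl

theorem add_mem_realRadicalSubmonoid {a u t : A} (hu : u ∈ realRadicalSubmonoid a)
    (ht : IsSumSq t) : u + t ∈ realRadicalSubmonoid a := by
  obtain ⟨m, s, hs, rfl⟩ := hu
  exact ⟨m, s + t, hs.add ht, by ring⟩

theorem mem_realRadical_iff_not_disjoint {I : Ideal A} {a : A} :
    a ∈ realRadical I ↔ ¬Disjoint (I : Set A) (realRadicalSubmonoid a) := by
  simp only [Set.not_disjoint_iff, SetLike.mem_coe, mem_realRadicalSubmonoid]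
  constructor
  · rintro ⟨m, n, b, h⟩
    exact ⟨_, h, m, _, IsSumSq.sum_sq _ b, rfl⟩
  · rintro ⟨_, h, m, s, hs, rfl⟩
    obtain ⟨n, b, rfl⟩ := hs.exists_eq_sum_fin_sq
    exact ⟨m, n, b, h⟩

theorem subset_realRadical (I : Ideal A) : (I : Set A) ⊆ realRadical I := fun a ha ↦
  ⟨1, 0, ![], by simpa [pow_succ] using I.mul_mem_left a ha⟩

theorem realRadical_subset_of_le {J p : Ideal A} [p.IsPrime] (hp : IsRealIdeal p)
    (hJp : J ≤ p) : realRadical J ⊆ p := by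
  rintro a ⟨m, n, b, h⟩
  have hsum : ∑ i, (Fin.cons (a ^ m) b : Fin (n + 1) → A) i ^ 2 ∈ p := by
    simpa [Fin.sum_univ_succ, ← pow_mul, mul_comm] using hJp h
  exact ‹p.IsPrime›.mem_of_pow_mem m (by simpa using hp _ _ hsum 0)

theorem Ideal.exists_le_maximal_disjoint (I : Ideal A) (S : Set A)
    (h : Disjoint (I : Set A) S) :
    ∃ p : Ideal A, I ≤ p ∧ Maximal (fun J : Ideal A ↦ Disjoint (J : Set A) S) p := by
  refine zorn_le_nonempty₀ _ (fun c hc hchain J hJ ↦ ?_) I h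
  refine ⟨sSup c, Set.disjoint_left.mpr fun x hx ↦ ?_, fun _ ↦ le_sSup⟩
  obtain ⟨K, hKc, hxK⟩ := (Submodule.mem_sSup_of_directed ⟨J, hJ⟩ hchain.directedOn).1 hx
  exact Set.disjoint_left.mp (hc hKc) hxK

theorem Ideal.mem_of_sq_add_mem_of_maximally_disjoint {p : Ideal A} {S : Submonoid A}
    (hS : ∀ u ∈ S, ∀ t, IsSumSq t → u + t ∈ S) (disjoint : Disjoint (p : Set A) S)
    (maximally_disjoint : ∀ J : Ideal A, p < J → ¬Disjoint (J : Set A) S)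
    {x t : A} (ht : IsSumSq t) (hxt : x ^ 2 + t ∈ p) : x ∈ p := by
  by_contra hx
  have := maximally_disjoint (p ⊔ Ideal.span {x}) (Submodule.lt_sup_iff_notMem.mpr hx)
  simp only [Set.not_disjoint_iff, SetLike.mem_coe, Submodule.mem_sup,
    Ideal.mem_span_singleton] at this
  obtain ⟨u, ⟨q, hq, _, ⟨r, rfl⟩, rfl⟩, hu⟩ := this
  -- `u ^ 2 + r ^ 2 t` lies in `S`, yet equals `q (q + 2 x r) + r ^ 2 (x ^ 2 + t) ∈ p`.
  refine disjoint.ne_of_mem (p.add_mem (p.mul_mem_right (q + 2 * x * r) hq)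
      (p.mul_mem_left (r * r) hxt))
    (hS _ (S.mul_mem hu hu) _ ((IsSumSq.mul_self r).mul ht)) (by ring)

theorem Ideal.isRealIdeal_of_maximally_disjoint {p : Ideal A} {S : Submonoid A}
    (hS : ∀ u ∈ S, ∀ t, IsSumSq t → u + t ∈ S) (disjoint : Disjoint (p : Set A) S)
    (maximally_disjoint : ∀ J : Ideal A, p < J → ¬Disjoint (J : Set A) S) :
    IsRealIdeal p := by
  intro n c hc j
  refine p.mem_of_sq_add_mem_of_maximally_disjoint hS disjoint maximally_disjoint
    (IsSumSq.sum_sq (Finset.univ.erase j) c) ?_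
  rwa [Finset.add_sum_erase _ (fun i ↦ c i ^ 2) (Finset.mem_univ j)]

theorem exists_realSpectrum_le_notMem_of_notMem_realRadical {I : Ideal A} {a : A}
    (ha : a ∉ realRadical I) : ∃ p : RealSpectrum A, I ≤ p.asIdeal ∧ a ∉ p.asIdeal := by
  rw [mem_realRadical_iff_not_disjoint, not_not] at ha
  obtain ⟨p, hIp, hp⟩ := I.exists_le_maximal_disjoint _ ha
  have maximally_disjoint (J : Ideal A) (hJ : p < J) := hp.not_prop_of_gt hJ
  have hsq : a ^ 2 ∈ realRadicalSubmonoid a := ⟨1, 0, .zero, by ring⟩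
  refine ⟨⟨p, p.isPrime_of_maximally_disjoint _ hp.prop maximally_disjoint,
    p.isRealIdeal_of_maximally_disjoint (fun _ hu _ ↦ add_mem_realRadicalSubmonoid hu)
      hp.prop maximally_disjoint⟩, hIp, fun hap ↦ ?_⟩
  exact hp.prop.ne_of_mem (p.pow_mem_of_mem hap 2 two_pos) hsq rfl

end RealRadical

open RealSpectrum in
/-- `V(I) ⊆ V(J)` if and only if `√[R]{I} ⊇ √[R]{J}`. -/
theorem zeroLocus_subset_zeroLocus_iff {A : Type*} [CommRing A] (I J : Ideal A) :
    zeroLocus I ⊆ zeroLocus J ↔ realRadical J ⊆ realRadical I := by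
  constructor
  · intro h a ha
    by_contra haI
    obtain ⟨p, hIp, hap⟩ := exists_realSpectrum_le_notMem_of_notMem_realRadical haI
    exact hap (realRadical_subset_of_le p.isReal (h hIp) ha)
  · intro h p hIp
    exact (subset_realRadical J).trans (h.trans (realRadical_subset_of_le p.isReal hIp))
end

section
/- Let A be a real ring, f ∈ A, and X the real Zariski spectrum of A. Then the canonical homomorphism ψ : Σ_f^{-1}A → O_X(D(f)), sending a/(f^{2n} + Σ x²) to the function p ↦ a/(f^{2n} + Σ x²) ∈ A_p, is a ring isomorphism; in particular it is surjective: every abstract real regular function s on D(f) is of the form p ↦ a/(f^{2k} + Σ x²) for some a ∈ A, k ∈ ℕ, and sum of squares Σ x² in A. -/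
/-- A commutative ring is *real* if a finite sum of squares vanishes only when
each of the summands' base elements vanishes. -/
def IsRealRing (A : Type*) [CommRing A] : Prop :=
  ∀ (n : ℕ) (a : Fin n → A), (∑ i, a i ^ 2) = 0 → ∀ i, a i = 0

namespace RealSpectrum

variable {A : Type*} [CommRing A]

/-- The real Zariski topology, whose closed sets are exactly the sets `zeroLocus I`. -/
instance zariskiTopology : TopologicalSpace (RealSpectrum A) :=
  TopologicalSpace.ofClosed {s | ∃ I : Ideal A, s = zeroLocus I}
    ⟨⊤, by
      ext p
      simp only [Set.mem_empty_iff_false, zeroLocus, Set.mem_setOf_eq, false_iff]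
      exact fun h => p.isPrime.ne_top (top_le_iff.mp h)⟩
    (fun F hF => ⟨sSup {I : Ideal A | zeroLocus I ∈ F}, by
      ext p
      simp only [Set.mem_sInter, zeroLocus, Set.mem_setOf_eq, sSup_le_iff]
      constructor
      · intro h I hI
        exact h (zeroLocus I) hI
      · intro h s hs
        obtain ⟨I, rfl⟩ := hF hs
        exact h I hs⟩)
    (by
      rintro _ ⟨I, rfl⟩ _ ⟨J, rfl⟩
      refine ⟨I * J, ?_⟩
      ext p
      simp only [Set.mem_union, zeroLocus, Set.mem_setOf_eq, p.isPrime.mul_le])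

theorem isClosed_iff (s : Set (RealSpectrum A)) :
    IsClosed s ↔ ∃ I : Ideal A, s = zeroLocus I := by
  rw [← isOpen_compl_iff]
  change sᶜᶜ ∈ _ ↔ _
  rw [compl_compl]
  rfl

theorem basicOpen_eq_compl (f : A) :
    basicOpen f = (zeroLocus (Ideal.span {f}))ᶜ := by
  ext p
  simp [basicOpen, zeroLocus, Ideal.span_le, Set.singleton_subset_iff]

theorem isOpen_basicOpen (f : A) : IsOpen (basicOpen f) := by
  rw [basicOpen_eq_compl, isOpen_compl_iff, isClosed_iff]
  exact ⟨_, rfl⟩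

end RealSpectrum

/-- The set of finite sums of squares in `A`. -/
def SumSq (A : Type*) [CommRing A] : Set A :=
  {x | ∃ (n : ℕ) (c : Fin n → A), x = ∑ i, c i ^ 2}

theorem SumSq.zero {A : Type*} [CommRing A] : (0 : A) ∈ SumSq A := ⟨0, fun i => 0, by simp⟩

theorem SumSq.sq {A : Type*} [CommRing A] (a : A) : a ^ 2 ∈ SumSq A := ⟨1, fun _ => a, by simp⟩

theorem SumSq.add {A : Type*} [CommRing A] {x y : A} (hx : x ∈ SumSq A) (hy : y ∈ SumSq A) :
    x + y ∈ SumSq A := by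
  obtain ⟨n, c, rfl⟩ := hx
  obtain ⟨m, d, rfl⟩ := hy
  exact ⟨n + m, Fin.append c d, by
    simp [Fin.sum_univ_add, Fin.append_left, Fin.append_right]⟩

theorem SumSq.mul {A : Type*} [CommRing A] {x y : A} (hx : x ∈ SumSq A) (hy : y ∈ SumSq A) :
    x * y ∈ SumSq A := by
  obtain ⟨n, c, rfl⟩ := hx
  obtain ⟨m, d, rfl⟩ := hy
  refine ⟨n * m, fun k => c (finProdFinEquiv.symm k).1 * d (finProdFinEquiv.symm k).2, ?_⟩
  rw [Finset.sum_mul_sum]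
  rw [show ∑ i : Fin (n * m),
      (fun k => c (finProdFinEquiv.symm k).1 * d (finProdFinEquiv.symm k).2) i ^ 2
      = ∑ q : Fin n × Fin m, (c q.1 * d q.2) ^ 2 from
    Equiv.sum_comp finProdFinEquiv.symm (fun q : Fin n × Fin m => (c q.1 * d q.2) ^ 2)]
  simp [Fintype.sum_prod_type, mul_pow]

namespace RealSpectrum

variable {A : Type*} [CommRing A]

/-- The multiplicative set `Σ_f = { f ^ (2 * m) + ∑ i, a i ^ 2 }`. -/
def sigmaMonoid (f : A) : Submonoid A where
  carrier := {x | ∃ (m : ℕ), ∃ s ∈ SumSq A, x = f ^ (2 * m) + s}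
  one_mem' := ⟨0, 0, SumSq.zero, by simp⟩
  mul_mem' := by
    rintro x y ⟨m, s, hs, rfl⟩ ⟨m', t, ht, rfl⟩
    refine ⟨m + m', f ^ (2 * m) * t + f ^ (2 * m') * s + s * t, ?_, by ring⟩
    have h1 : f ^ (2 * m) ∈ SumSq A := by
      have := SumSq.sq (f ^ m); rwa [← pow_mul, mul_comm m 2] at this
    have h2 : f ^ (2 * m') ∈ SumSq A := by
      have := SumSq.sq (f ^ m'); rwa [← pow_mul, mul_comm m' 2] at this
    exact SumSq.add (SumSq.add (SumSq.mul h1 ht) (SumSq.mul h2 hs)) (SumSq.mul hs ht)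

theorem mem_sigmaMonoid_iff (f x : A) :
    x ∈ sigmaMonoid f ↔ ∃ (m n : ℕ) (c : Fin n → A), x = f ^ (2 * m) + ∑ i, c i ^ 2 := by
  constructor
  · rintro ⟨m, s, ⟨n, c, rfl⟩, rfl⟩
    exact ⟨m, n, c, rfl⟩
  · rintro ⟨m, n, c, rfl⟩
    exact ⟨m, _, ⟨n, c, rfl⟩, rfl⟩

/-- The multiplicative set `Σ_1 = { 1 + ∑ i, a i ^ 2 }`. -/
def sigma1 (A : Type*) [CommRing A] : Submonoid A where
  carrier := {x | ∃ s ∈ SumSq A, x = 1 + s}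
  one_mem' := ⟨0, SumSq.zero, by simp⟩
  mul_mem' := by
    rintro x y ⟨s, hs, rfl⟩ ⟨t, ht, rfl⟩
    exact ⟨s + t + s * t, SumSq.add (SumSq.add hs ht) (SumSq.mul hs ht), by ring⟩

theorem mem_sigma1_iff (x : A) :
    x ∈ sigma1 A ↔ ∃ (n : ℕ) (c : Fin n → A), x = 1 + ∑ i, c i ^ 2 := by
  constructor
  · rintro ⟨s, ⟨n, c, rfl⟩, rfl⟩
    exact ⟨n, c, rfl⟩
  · rintro ⟨n, c, rfl⟩
    exact ⟨_, ⟨n, c, rfl⟩, rfl⟩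

end RealSpectrum

namespace RealSpectrum

variable {A : Type*} [CommRing A]

/-- An *abstract real regular function* on `U ⊆ RealSpectrum A`: a dependent function `s`
assigning to each `p ∈ U` an element of the localization `A_p`, such that around every
point of `U` it is given by a single fraction `a / g` with `g` outside all the primes of
the neighborhood. -/
def IsLocallyFraction {U : Set (RealSpectrum A)}
    (s : ∀ p : U, Localization.AtPrime (p : RealSpectrum A).asIdeal) : Prop :=
  ∀ p : U, ∃ V : Set (RealSpectrum A), IsOpen V ∧ (p : RealSpectrum A) ∈ V ∧ V ⊆ U ∧
    ∃ a g : A, ∀ q : U, (q : RealSpectrum A) ∈ V →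
      ∃ hg : g ∉ (q : RealSpectrum A).asIdeal,
        s q = IsLocalization.mk' (Localization.AtPrime (q : RealSpectrum A).asIdeal) a
          (⟨g, hg⟩ : (q : RealSpectrum A).asIdeal.primeCompl)

end RealSpectrum

namespace RealSpectrum

variable {A : Type*} [CommRing A]

/-- The ring `O_X(U)` of abstract real regular functions on an open set `U`, as a
subring of the product of the localizations `A_p`, with pointwise operations. -/
def regularFunctions (U : Set (RealSpectrum A)) (hU : IsOpen U) :
    Subring (∀ p : U, Localization.AtPrime (p : RealSpectrum A).asIdeal) where
  carrier := {s | IsLocallyFraction s}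
  zero_mem' := fun p => ⟨U, hU, p.2, le_refl U, 0, 1, fun q _ =>
    ⟨fun h1 => (q : RealSpectrum A).isPrime.ne_top ((Ideal.eq_top_iff_one _).mpr h1), by
      simp [IsLocalization.mk'_zero]⟩⟩
  one_mem' := fun p => ⟨U, hU, p.2, le_refl U, 1, 1, fun q _ =>
    ⟨fun h1 => (q : RealSpectrum A).isPrime.ne_top ((Ideal.eq_top_iff_one _).mpr h1), by
      have : (⟨1, _⟩ : (q : RealSpectrum A).asIdeal.primeCompl) = 1 := rfl
      rw [this, IsLocalization.mk'_one]
      simp⟩⟩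
  add_mem' := by
    rintro s t hs ht p
    obtain ⟨V₁, hV₁, hpV₁, hV₁U, a₁, g₁, h₁⟩ := hs p
    obtain ⟨V₂, hV₂, hpV₂, hV₂U, a₂, g₂, h₂⟩ := ht p
    refine ⟨V₁ ∩ V₂, hV₁.inter hV₂, ⟨hpV₁, hpV₂⟩, fun x hx => hV₁U hx.1,
      a₁ * g₂ + a₂ * g₁, g₁ * g₂, fun q hq => ?_⟩
    obtain ⟨hg₁, e₁⟩ := h₁ q hq.1
    obtain ⟨hg₂, e₂⟩ := h₂ q hq.2
    refine ⟨fun hmem => ((q : RealSpectrum A).isPrime.mem_or_mem hmem).elim hg₁ hg₂, ?_⟩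
    have : (⟨g₁ * g₂, _⟩ : (q : RealSpectrum A).asIdeal.primeCompl)
        = ⟨g₁, hg₁⟩ * ⟨g₂, hg₂⟩ := rfl
    rw [Pi.add_apply, e₁, e₂, this]
    exact (IsLocalization.mk'_add a₁ a₂ ⟨g₁, hg₁⟩ ⟨g₂, hg₂⟩).symm
  neg_mem' := by
    rintro s hs p
    obtain ⟨V, hV, hpV, hVU, a, g, h⟩ := hs p
    refine ⟨V, hV, hpV, hVU, -a, g, fun q hq => ?_⟩
    obtain ⟨hg, e⟩ := h q hq
    refine ⟨hg, ?_⟩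
    rw [Pi.neg_apply, e, IsLocalization.mk'_eq_mul_mk'_one,
      IsLocalization.mk'_eq_mul_mk'_one (-a), map_neg, neg_mul]
  mul_mem' := by
    rintro s t hs ht p
    obtain ⟨V₁, hV₁, hpV₁, hV₁U, a₁, g₁, h₁⟩ := hs p
    obtain ⟨V₂, hV₂, hpV₂, hV₂U, a₂, g₂, h₂⟩ := ht p
    refine ⟨V₁ ∩ V₂, hV₁.inter hV₂, ⟨hpV₁, hpV₂⟩, fun x hx => hV₁U hx.1,
      a₁ * a₂, g₁ * g₂, fun q hq => ?_⟩
    obtain ⟨hg₁, e₁⟩ := h₁ q hq.1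
    obtain ⟨hg₂, e₂⟩ := h₂ q hq.2
    refine ⟨fun hmem => ((q : RealSpectrum A).isPrime.mem_or_mem hmem).elim hg₁ hg₂, ?_⟩
    have : (⟨g₁ * g₂, _⟩ : (q : RealSpectrum A).asIdeal.primeCompl)
        = ⟨g₁, hg₁⟩ * ⟨g₂, hg₂⟩ := rfl
    rw [Pi.mul_apply, e₁, e₂, this, IsLocalization.mk'_mul]

end RealSpectrum

/-!
The engine is a real Nullstellensatz: if every real prime containing an ideal `J` contains `g`,
then `J` meets `Σ_g`, because an ideal maximal among those disjoint from `Σ_g` is prime and real.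
Applied to annihilators it makes `ψ` injective and, in a real ring (where `τ d = 0` with
`τ ∈ Σ_g` forces `g ^ m d = 0`), it shows that local representations `a i / h i` of a regular
function satisfy `(f h i h j) ^ m (a i h j - a j h i) = 0`. Applied to the span of the local
denominators it yields a finite cover of `D(f)` and then a global denominator in `Σ_f`, as in the
classical proof that the sections of `Spec A` over `D(f)` form `A_f`.
-/

theorem sum_mul_eq_mul_sum_of_cross_mul_eq {A ι : Type*} [CommRing A] (s : Finset ι)
    (e b g : ι → A) (hbg : ∀ i j, b i * g j = b j * g i) (i : ι) :
    (∑ j ∈ s, e j * b j) * g i = b i * ∑ j ∈ s, e j * g j := by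
  rw [Finset.sum_mul, Finset.mul_sum]
  refine Finset.sum_congr rfl fun j _ => ?_
  rw [mul_assoc, hbg j i]
  ring

namespace RealSpectrum

variable {A : Type*} [CommRing A]

theorem notMem_of_mem_sigmaMonoid {f σ : A} (hσ : σ ∈ sigmaMonoid f) {p : RealSpectrum A}
    (hf : f ∉ p.asIdeal) : σ ∉ p.asIdeal := by
  obtain ⟨m, n, c, rfl⟩ := (mem_sigmaMonoid_iff f σ).1 hσ
  intro hp
  have hsq : ∑ i, (Fin.cons (f ^ m) c : Fin (n + 1) → A) i ^ 2 ∈ p.asIdeal := by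
    rwa [Fin.sum_univ_succ, Fin.cons_zero, ← pow_mul, mul_comm m 2]
  exact hf (p.isPrime.mem_of_pow_mem m (p.isReal _ _ hsq 0))

theorem add_mem_sigmaMonoid {g σ s : A} (hσ : σ ∈ sigmaMonoid g) (hs : s ∈ SumSq A) :
    σ + s ∈ sigmaMonoid g := by
  obtain ⟨m, t, ht, rfl⟩ := hσ
  exact ⟨m, t + s, SumSq.add ht hs, add_assoc _ _ _⟩

theorem isRealIdeal_of_forall_sq_add_mem {J : Ideal A}
    (h : ∀ a, ∀ s ∈ SumSq A, a ^ 2 + s ∈ J → a ∈ J) : IsRealIdeal J := by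
  rintro (_ | n) a ha k
  · exact k.elim0
  · rw [Fin.sum_univ_succAbove _ k] at ha
    exact h _ _ ⟨n, _, rfl⟩ ha

/-- If `a² + s ∈ p` with `s` a sum of squares but `a ∉ p`, then `p + (a)` meets `Σ_g` in some
`σ = x + c a` with `x ∈ p`, and `σ² + c² s ∈ Σ_g` lies in `p` as it is `c² (a² + s)` modulo `p`. -/
theorem isRealIdeal_of_maximal_disjoint {g : A} {p : Ideal A}
    (hp : Maximal (fun I : Ideal A => Disjoint (I : Set A) (sigmaMonoid g)) p) :
    IsRealIdeal p := by
  refine isRealIdeal_of_forall_sq_add_mem fun a s hs has => ?_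
  by_contra ha
  obtain ⟨σ, hσ, hσg⟩ :=
    Set.not_disjoint_iff.1 (hp.not_prop_of_gt (Submodule.lt_sup_iff_notMem.2 ha))
  obtain ⟨x, hx, _, hy, rfl⟩ := Submodule.mem_sup.1 hσ
  obtain ⟨c, rfl⟩ := Ideal.mem_span_singleton'.1 hy
  have hmem : (x + c * a) ^ 2 + c ^ 2 * s ∈ p := by
    rw [show (x + c * a) ^ 2 + c ^ 2 * s = x * (x + 2 * c * a) + c ^ 2 * (a ^ 2 + s) by ring]
    exact p.add_mem (p.mul_mem_right _ hx) (p.mul_mem_left _ has)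
  exact Set.disjoint_left.1 hp.prop hmem
    (add_mem_sigmaMonoid (pow_mem hσg 2) (SumSq.mul (SumSq.sq c) hs))

theorem exists_le_of_disjoint_sigmaMonoid {g : A} {J : Ideal A}
    (hJ : Disjoint (J : Set A) (sigmaMonoid g)) :
    ∃ p : RealSpectrum A, J ≤ p.asIdeal ∧ g ∉ p.asIdeal := by
  set S := {I : Ideal A | Disjoint (I : Set A) (sigmaMonoid g)}
  have hchain : ∀ c ⊆ S, IsChain (· ≤ ·) c → ∀ I ∈ c, ∃ K ∈ S, ∀ I' ∈ c, I' ≤ K :=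
    fun c hc hchain I hI => ⟨sSup c, Set.disjoint_left.2 fun x hx => by
      obtain ⟨I', hI', hxI'⟩ :=
        (Submodule.mem_sSup_of_directed ⟨I, hI⟩ hchain.directedOn).1 hx
      exact Set.disjoint_left.1 (hc hI') hxI', fun _ => le_sSup⟩
  obtain ⟨p, hJp, hp⟩ := zorn_le_nonempty₀ _ hchain J hJ
  refine ⟨⟨p, Ideal.isPrime_of_maximally_disjoint _ _ hp.1 fun _ => hp.not_prop_of_gt,
    isRealIdeal_of_maximal_disjoint hp⟩, hJp, fun hg => ?_⟩
  exact Set.disjoint_left.1 hp.1 (p.pow_mem_of_mem hg 2 two_pos) ⟨1, 0, SumSq.zero, by ring⟩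

theorem exists_mem_sigmaMonoid_of_forall_le {g : A} {J : Ideal A}
    (h : ∀ p : RealSpectrum A, J ≤ p.asIdeal → g ∈ p.asIdeal) :
    ∃ σ ∈ sigmaMonoid g, σ ∈ J := by
  by_contra! hJ
  obtain ⟨p, hJp, hg⟩ := exists_le_of_disjoint_sigmaMonoid (Set.disjoint_right.2 hJ)
  exact hg (h p hJp)

theorem exists_mem_sigmaMonoid_mul_eq_zero {g d : A}
    (h : ∀ p : RealSpectrum A, g ∉ p.asIdeal →
      algebraMap A (Localization.AtPrime p.asIdeal) d = 0) :
    ∃ τ ∈ sigmaMonoid g, τ * d = 0 := by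
  obtain ⟨τ, hτ, hτd⟩ := exists_mem_sigmaMonoid_of_forall_le
    (J := (Ideal.span {d}).annihilator) fun p hp => by
      by_contra hg
      obtain ⟨u, hu⟩ := (IsLocalization.map_eq_zero_iff p.asIdeal.primeCompl _ d).1 (h p hg)
      exact u.2 (hp ((Submodule.mem_annihilator_span_singleton d (u : A)).2 hu))
  exact ⟨τ, hτ, (Submodule.mem_annihilator_span_singleton d τ).1 hτd⟩

theorem exists_finset_sum_mem_sigmaMonoid {ι : Type*} {g : A} (h : ι → A)
    (hcov : ∀ p : RealSpectrum A, g ∉ p.asIdeal → ∃ i, h i ∉ p.asIdeal) :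
    ∃ (t : Finset ι) (e : ι → A), ∑ i ∈ t, e i * h i ∈ sigmaMonoid g := by
  obtain ⟨σ, hσ, hσh⟩ := exists_mem_sigmaMonoid_of_forall_le
    (J := Ideal.span (Set.range h)) fun p hp => by
      by_contra hg
      obtain ⟨i, hi⟩ := hcov p hg
      exact hi (hp (Ideal.subset_span ⟨i, rfl⟩))
  obtain ⟨e, rfl⟩ := Finsupp.mem_ideal_span_range_iff_exists_finsupp.1 hσh
  exact ⟨e.support, e, hσ⟩

theorem exists_finset_cover {ι : Type*} {g : A} (h : ι → A)
    (hcov : ∀ p : RealSpectrum A, g ∉ p.asIdeal → ∃ i, h i ∉ p.asIdeal) :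
    ∃ t : Finset ι, ∀ p : RealSpectrum A, g ∉ p.asIdeal → ∃ i ∈ t, h i ∉ p.asIdeal := by
  obtain ⟨t, e, hσ⟩ := exists_finset_sum_mem_sigmaMonoid h hcov
  refine ⟨t, fun p hg => ?_⟩
  by_contra! ht
  exact notMem_of_mem_sigmaMonoid hσ hg
    (p.asIdeal.sum_mem fun i hi => p.asIdeal.mul_mem_left _ (ht i hi))

/-- `(g ^ m d)² + ∑ (c i d)² = τ d² = 0` for `τ = g ^ (2 m) + ∑ c i ²`. -/
theorem _root_.IsRealRing.exists_pow_mul_eq_zero (hA : IsRealRing A) {g d : A}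
    (h : ∀ p : RealSpectrum A, g ∉ p.asIdeal →
      algebraMap A (Localization.AtPrime p.asIdeal) d = 0) :
    ∃ m, g ^ m * d = 0 := by
  obtain ⟨τ, hτ, hτd⟩ := exists_mem_sigmaMonoid_mul_eq_zero h
  obtain ⟨m, n, c, rfl⟩ := (mem_sigmaMonoid_iff g τ).1 hτ
  refine ⟨m, ?_⟩
  have hsq : ∑ i, (Fin.cons (g ^ m * d) fun i => c i * d : Fin (n + 1) → A) i ^ 2 = 0 := by
    simp only [Fin.sum_univ_succ, Fin.cons_zero, Fin.cons_succ, mul_pow, ← Finset.sum_mul]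
    linear_combination d * hτd
  simpa using hA _ _ hsq 0

/-- Renormalising `a i / h i` to `B i / G i` with `G i = h i (f h i) ^ M` turns the compatibility
up to powers into exact cross-multiplicative relations, and `Σ_f` meets the span of the `G i`. -/
theorem exists_mem_sigmaMonoid_of_compatible {ι : Type*} [Fintype ι] {f : A} (a h : ι → A)
    (hcov : ∀ p : RealSpectrum A, f ∉ p.asIdeal → ∃ i, h i ∉ p.asIdeal)
    (hcompat : ∀ i j, ∃ m, (f * h i * h j) ^ m * (a i * h j - a j * h i) = 0) :
    ∃ b, ∃ σ ∈ sigmaMonoid f, ∀ i, ∃ M, (f * h i) ^ M * (b * h i - a i * σ) = 0 := by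
  choose m hm using hcompat
  let M := Finset.univ.sup fun ij : ι × ι => m ij.1 ij.2
  have hM (i j : ι) : (f * h i * h j) ^ M * (a i * h j - a j * h i) = 0 :=
    pow_mul_eq_zero_of_le (Finset.le_sup (f := fun ij : ι × ι => m ij.1 ij.2)
      (Finset.mem_univ (i, j))) (hm i j)
  have hcross (i j : ι) : (a i * (f * h i) ^ M) * (h j * (f * h j) ^ M) =
      (a j * (f * h j) ^ M) * (h i * (f * h i) ^ M) := by
    linear_combination f ^ M * hM i j
  obtain ⟨t, e, hσ⟩ := exists_finset_sum_mem_sigmaMonoid (g := f)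
    (fun i => h i * (f * h i) ^ M) fun p hf => by
      obtain ⟨i, hi⟩ := hcov p hf
      exact ⟨i, p.asIdeal.primeCompl.mul_mem hi
        (pow_mem (p.asIdeal.primeCompl.mul_mem hf hi) M)⟩
  refine ⟨∑ j ∈ t, e j * (a j * (f * h j) ^ M), _, hσ, fun i => ⟨M, ?_⟩⟩
  linear_combination sum_mul_eq_mul_sum_of_cross_mul_eq t e _ _ hcross i

theorem exists_local_fraction {U : Set (RealSpectrum A)} {hU : IsOpen U}
    (s : regularFunctions U hU) (p : U) :
    ∃ a h : A, h ∉ p.1.asIdeal ∧ ∀ (q : U) (hq : h ∉ q.1.asIdeal),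
      s.1 q = IsLocalization.mk' (Localization.AtPrime q.1.asIdeal) a
        (⟨h, hq⟩ : q.1.asIdeal.primeCompl) := by
  obtain ⟨V, hV, hpV, -, a, g, hs⟩ := s.2 p
  obtain ⟨I, hI⟩ := (isClosed_iff Vᶜ).1 hV.isClosed_compl
  obtain ⟨c, hcI, hcp⟩ : ∃ c ∈ I, c ∉ p.1.asIdeal := by
    by_contra! H
    exact (hI ▸ H : p.1 ∈ Vᶜ) hpV
  have hcV (q : RealSpectrum A) (hq : c ∉ q.asIdeal) : q ∈ V := by
    by_contra hqV
    exact hq ((hI ▸ hqV : q ∈ zeroLocus I) hcI)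
  refine ⟨c * a, c * g, p.1.asIdeal.primeCompl.mul_mem hcp (hs p hpV).1, fun q hq => ?_⟩
  obtain ⟨_, hsq⟩ := hs q (hcV q.1 fun hc => hq (q.1.asIdeal.mul_mem_right g hc))
  rw [hsq, IsLocalization.mk'_eq_iff_eq]
  congr 1
  ring

theorem sigmaMonoid_le_primeCompl {f : A} {p : RealSpectrum A} (hf : f ∉ p.asIdeal) :
    sigmaMonoid f ≤ p.asIdeal.primeCompl.comap (RingHom.id A) :=
  fun _ hσ => notMem_of_mem_sigmaMonoid hσ hf

/-- The canonical map `ψ : Σ_f⁻¹A → O_X(D(f))`: at `q ∈ D(f)` it is the localization map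
`Σ_f⁻¹A → A_q`, which exists because `Σ_f` avoids `q`. -/
noncomputable def toBasicOpen (f : A) :
    Localization (sigmaMonoid f) →+* regularFunctions (basicOpen f) (isOpen_basicOpen f) :=
  (RingHom.pi fun q : basicOpen f => IsLocalization.map (Localization.AtPrime q.1.asIdeal)
      (RingHom.id A) (sigmaMonoid_le_primeCompl q.2)).codRestrict _ fun x p => by
    obtain ⟨⟨a, σ⟩, rfl⟩ := IsLocalization.mk'_surjective (sigmaMonoid f) x
    exact ⟨basicOpen f, isOpen_basicOpen f, p.2, subset_rfl, a, σ, fun q _ =>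
      ⟨notMem_of_mem_sigmaMonoid σ.2 q.2,
        IsLocalization.map_mk' (sigmaMonoid_le_primeCompl q.2) _ _⟩⟩

theorem toBasicOpen_mk' (f a : A) (σ : sigmaMonoid f) (q : basicOpen f)
    (hσ : (σ : A) ∉ q.1.asIdeal) :
    (toBasicOpen f (IsLocalization.mk' _ a σ)).1 q =
      IsLocalization.mk' (Localization.AtPrime q.1.asIdeal) a
        (⟨σ, hσ⟩ : q.1.asIdeal.primeCompl) :=
  IsLocalization.map_mk' (sigmaMonoid_le_primeCompl q.2) _ _

theorem toBasicOpen_injective (f : A) : Function.Injective (toBasicOpen f) := by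
  refine (injective_iff_map_eq_zero _).2 fun x hx => ?_
  obtain ⟨⟨a, σ⟩, rfl⟩ := IsLocalization.mk'_surjective (sigmaMonoid f) x
  obtain ⟨τ, hτ, hτa⟩ := exists_mem_sigmaMonoid_mul_eq_zero (g := f) (d := a) fun p hf => by
    have hσ := notMem_of_mem_sigmaMonoid σ.2 hf
    have h0 := toBasicOpen_mk' f a σ ⟨p, hf⟩ hσ
    rw [hx] at h0
    rw [← IsLocalization.mk'_spec (Localization.AtPrime p.asIdeal) a
      (⟨σ, hσ⟩ : p.asIdeal.primeCompl), ← h0]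
    exact zero_mul _
  exact (IsLocalization.mk'_eq_zero_iff a σ).2 ⟨⟨τ, hτ⟩, hτa⟩

theorem toBasicOpen_surjective {f : A} (hA : IsRealRing A) :
    Function.Surjective (toBasicOpen f) := by
  intro s
  choose a h hp hs using exists_local_fraction s
  obtain ⟨t, ht⟩ := exists_finset_cover h fun q hq => ⟨⟨q, hq⟩, hp ⟨q, hq⟩⟩
  have hcompat (i j : t) : ∃ m, (f * h i * h j) ^ m * (a i * h j - a j * h i) = 0 := by
    refine hA.exists_pow_mul_eq_zero fun q hq => ?_
    obtain ⟨⟨hf, hi⟩, hj⟩ : (f ∉ q.asIdeal ∧ h i ∉ q.asIdeal) ∧ h j ∉ q.asIdeal := by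
      simpa only [Ideal.IsPrime.mul_mem_iff_mem_or_mem, not_or] using hq
    have hij := (hs i ⟨q, hf⟩ hi).symm.trans (hs j ⟨q, hf⟩ hj)
    rw [IsLocalization.mk'_eq_iff_eq] at hij
    rw [map_sub, sub_eq_zero, mul_comm (a i), mul_comm (a j), hij]
  obtain ⟨b, σ, hσ, hb⟩ := exists_mem_sigmaMonoid_of_compatible (fun i : t => a i)
    (fun i : t => h i) (fun q hq => (ht q hq).elim fun i ⟨hit, hi⟩ => ⟨⟨i, hit⟩, hi⟩) hcompat
  refine ⟨IsLocalization.mk' _ b ⟨σ, hσ⟩, Subtype.ext (funext fun q => ?_)⟩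
  obtain ⟨i, hit, hi⟩ := ht q.1 q.2
  obtain ⟨M, hM⟩ := hb ⟨i, hit⟩
  rw [toBasicOpen_mk' f b ⟨σ, hσ⟩ q (notMem_of_mem_sigmaMonoid hσ q.2), hs i q hi,
    IsLocalization.mk'_eq_iff_eq, IsLocalization.eq_iff_exists q.1.asIdeal.primeCompl]
  exact ⟨⟨(f * h i) ^ M, pow_mem (q.1.asIdeal.primeCompl.mul_mem q.2 hi) M⟩,
    by linear_combination hM⟩

end RealSpectrum

open RealSpectrum in
/-- For a real ring `A`, the canonical homomorphism `ψ : Σ_f⁻¹A → O_X(D(f))` sending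
`a / (f^(2k) + ∑ x²)` to the function `p ↦ a / (f^(2k) + ∑ x²) ∈ A_p` is a ring
isomorphism; in particular every abstract real regular function on `D(f)` is globally of
the form `p ↦ a / (f^(2k) + ∑ x²)`. -/
theorem canonical_map_isomorphism {A : Type*} [CommRing A] (hA : IsRealRing A) (f : A) :
    ∃ ψ : Localization (sigmaMonoid f) ≃+*
        regularFunctions (basicOpen f) (isOpen_basicOpen f),
      (∀ (a : A) (σ : sigmaMonoid f) (q : (basicOpen f : Set (RealSpectrum A)))
          (hσ : (σ : A) ∉ (q : RealSpectrum A).asIdeal),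
        (ψ (Localization.mk a σ)).1 q =
          IsLocalization.mk' (Localization.AtPrime (q : RealSpectrum A).asIdeal) a
            (⟨(σ : A), hσ⟩ : (q : RealSpectrum A).asIdeal.primeCompl)) ∧
      ∀ s : regularFunctions (basicOpen f) (isOpen_basicOpen f),
        ∃ (a : A) (k : ℕ) (n : ℕ) (x : Fin n → A),
          ∀ (q : (basicOpen f : Set (RealSpectrum A)))
            (hq : f ^ (2 * k) + ∑ i, x i ^ 2 ∉ (q : RealSpectrum A).asIdeal),
            s.1 q = IsLocalization.mk'
              (Localization.AtPrime (q : RealSpectrum A).asIdeal) a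
              (⟨f ^ (2 * k) + ∑ i, x i ^ 2, hq⟩ :
                (q : RealSpectrum A).asIdeal.primeCompl) := by
  let ψ := RingEquiv.ofBijective (toBasicOpen f)
    ⟨toBasicOpen_injective f, toBasicOpen_surjective hA⟩
  refine ⟨ψ, fun a σ q hσ => ?_, fun s => ?_⟩
  · rw [Localization.mk_eq_mk']
    exact toBasicOpen_mk' f a σ q hσ
  · obtain ⟨x, rfl⟩ := ψ.surjective s
    obtain ⟨⟨a, σ, hσ⟩, rfl⟩ := IsLocalization.mk'_surjective (sigmaMonoid f) x
    obtain ⟨k, n, c, rfl⟩ := (mem_sigmaMonoid_iff f σ).1 hσ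
    exact ⟨a, k, n, c, toBasicOpen_mk' f a ⟨_, hσ⟩⟩
end
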